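/- Let W₀, W₁, W₂ be complex Hilbert spaces with real structures and L₀₁ ⊆ W₀ ⊕ (−W₁), L₁₂ ⊆ W₁ ⊕ (−W₂) Lagrangians, L = L₀₁ ⊕ L₁₂. Then σ has closed range when restricted to L if and only if P_L(Ū) and P_{L̄}(U) are closed, where U = δ(W₁), δ(w) = (0,w,w,0), and P_L, P_{L̄} are orthogonal projections onto L and L̄ respectively. -/

import Mathlib

/-!
Transport `W` to its `L²` Hilbert structure and let `K` be the closed subspace `L`. Then
`σ|_L = σ ∘ ι_K` has adjoint `P_K ∘ δ̄` with `δ̄ w = (0, w, -w, 0)`, whose range is `Ū`, so by the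
closed range theorem `σ(L)` is closed iff `P_L(Ū)` is closed. The conjugation of `W` is a continuous
involution that maps `L` to `L̄` and `Ū` to `U` and preserves orthogonality, so it carries
`P_L(Ū)` onto `P_{L̄}(U)`.
-/

noncomputable section

/-- A real structure on a complex inner product space: an anti-unitary involution `v ↦ v̄`. -/
structure RealStructure (W : Type*) [NormedAddCommGroup W] [InnerProductSpace ℂ W] where
  conj : W → W
  map_add : ∀ v w : W, conj (v + w) = conj v + conj w
  map_smul : ∀ (c : ℂ) (v : W), conj (c • v) = (starRingEnd ℂ) c • conj v
  invol : ∀ v : W, conj (conj v) = v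
  inner_conj : ∀ v w : W, (inner ℂ (conj v) (conj w) : ℂ) = (starRingEnd ℂ) (inner ℂ v w : ℂ)

/-- The real structure of `A ⊕ (−B)`. -/
def pairConj {A B : Type*} [NormedAddCommGroup A] [InnerProductSpace ℂ A]
    [NormedAddCommGroup B] [InnerProductSpace ℂ B]
    (rA : RealStructure A) (rB : RealStructure B) : A × B → A × B :=
  fun p => (rA.conj p.1, -rB.conj p.2)

/-- The Hermitian inner product of `A ⊕ B`. -/
def pairInner {A B : Type*} [NormedAddCommGroup A] [InnerProductSpace ℂ A]
    [NormedAddCommGroup B] [InnerProductSpace ℂ B] (x y : A × B) : ℂ :=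
  (inner ℂ x.1 y.1 : ℂ) + (inner ℂ x.2 y.2 : ℂ)

/-- A Lagrangian `L ⊆ A ⊕ (−B)`. -/
def IsLagrangianPair {A B : Type*} [NormedAddCommGroup A] [InnerProductSpace ℂ A]
    [NormedAddCommGroup B] [InnerProductSpace ℂ B]
    (rA : RealStructure A) (rB : RealStructure B) (L : Submodule ℂ (A × B)) : Prop :=
  pairConj rA rB '' (L : Set (A × B)) = {y : A × B | ∀ x ∈ L, pairInner x y = 0}

variable {W₀ W₁ W₂ : Type*}
  [NormedAddCommGroup W₀] [InnerProductSpace ℂ W₀] [CompleteSpace W₀]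
  [NormedAddCommGroup W₁] [InnerProductSpace ℂ W₁] [CompleteSpace W₁]
  [NormedAddCommGroup W₂] [InnerProductSpace ℂ W₂] [CompleteSpace W₂]

/-- The Hermitian inner product of `W = W₀ ⊕ (−W₁) ⊕ W₁ ⊕ (−W₂)`. -/
def innerE (x y : (W₀ × W₁) × (W₁ × W₂)) : ℂ :=
  pairInner x.1 y.1 + pairInner x.2 y.2

/-- The set of orthogonal projections onto the (closed) subspace `C` of elements of `S`. -/
def projSet (C S : Set ((W₀ × W₁) × (W₁ × W₂))) : Set ((W₀ × W₁) × (W₁ × W₂)) :=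
  {p | p ∈ C ∧ ∃ u ∈ S, ∀ x ∈ C, innerE (u - p) x = 0}


/-- The conjugation of `W = W₀ ⊕ (−W₁) ⊕ W₁ ⊕ (−W₂)`. -/
def conjE (r₀ : RealStructure W₀) (r₁ : RealStructure W₁) (r₂ : RealStructure W₂) :
    (W₀ × W₁) × (W₁ × W₂) → (W₀ × W₁) × (W₁ × W₂) :=
  fun x => (pairConj r₀ r₁ x.1, pairConj r₁ r₂ x.2)

open scoped InnerProduct InnerProductSpace NNReal

namespace ContinuousLinearMap

variable {𝕜 E F : Type*} [RCLike 𝕜]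
  [NormedAddCommGroup E] [InnerProductSpace 𝕜 E] [CompleteSpace E]
  [NormedAddCommGroup F] [InnerProductSpace 𝕜 F] [CompleteSpace F]

theorem exists_norm_le_mul_norm_adjoint_of_isClosed_range (T : E →L[𝕜] F)
    (h : IsClosed (Set.range T)) : ∃ C : ℝ≥0, ∀ y ∈ T.range, ‖y‖ ≤ C * ‖(T†) y‖ := by
  have : CompleteSpace T.range := (show IsClosed (T.range : Set F) from h).completeSpace_coe
  obtain ⟨C, hC0, hC⟩ := T.rangeRestrict.exists_preimage_norm_le
    (LinearMap.surjective_rangeRestrict _)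
  refine ⟨C.toNNReal, ?_⟩
  rintro _ ⟨x, rfl⟩
  obtain ⟨x', hx', hx'C⟩ := hC ⟨T x, x, rfl⟩
  replace hx' : T x' = T x := congrArg Subtype.val hx'
  have key : ‖T x‖ * ‖T x‖ ≤ ‖T x‖ * (C * ‖(T†) (T x)‖) :=
    calc ‖T x‖ * ‖T x‖ = RCLike.re ⟪x', (T†) (T x)⟫_𝕜 := by
          rw [adjoint_inner_right, hx', inner_self_eq_norm_mul_norm]
      _ ≤ ‖x'‖ * ‖(T†) (T x)‖ := re_inner_le_norm _ _
      _ ≤ C * ‖T x‖ * ‖(T†) (T x)‖ := by gcongr; simpa using hx'C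
      _ = ‖T x‖ * (C * ‖(T†) (T x)‖) := by ring
  show ‖T x‖ ≤ C.toNNReal * ‖(T†) (T x)‖
  rw [Real.coe_toNNReal C hC0.le]
  have hb : 0 ≤ C * ‖(T†) (T x)‖ := by positivity
  by_contra! hlt
  nlinarith

theorem range_adjoint_eq_image_range (T : E →L[𝕜] F) [T.range.HasOrthogonalProjection] :
    Set.range (T†) = (T†) '' Set.range T := by
  refine subset_antisymm ?_ (Set.image_subset_range _ _)
  rintro _ ⟨y, rfl⟩
  have hker : y - T.range.starProjection y ∈ (T†).ker := by
    rw [← orthogonal_range]; exact T.range.sub_starProjection_mem_orthogonal y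
  refine ⟨_, T.range.starProjection_apply_mem y, ?_⟩
  rwa [LinearMap.mem_ker, map_sub, sub_eq_zero, eq_comm] at hker

theorem isClosed_range_adjoint_of_isClosed_range (T : E →L[𝕜] F)
    (h : IsClosed (Set.range T)) : IsClosed (Set.range (T†)) := by
  have : CompleteSpace T.range := (show IsClosed (T.range : Set F) from h).completeSpace_coe
  obtain ⟨C, hC⟩ := T.exists_norm_le_mul_norm_adjoint_of_isClosed_range h
  have hanti : AntilipschitzWith C (T† ∘L T.range.subtypeL) :=
    antilipschitz_of_bound _ fun y => hC y y.2
  have := hanti.isClosed_range (T† ∘L T.range.subtypeL).uniformContinuous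
  rw [coe_comp, Set.range_comp] at this
  rw [range_adjoint_eq_image_range]
  convert this using 2
  exact Subtype.range_coe.symm

theorem isClosed_range_iff_isClosed_range_adjoint (T : E →L[𝕜] F) :
    IsClosed (Set.range T) ↔ IsClosed (Set.range (T†)) :=
  ⟨T.isClosed_range_adjoint_of_isClosed_range, fun h => by
    simpa using (T†).isClosed_range_adjoint_of_isClosed_range h⟩

theorem isClosed_image_iff_isClosed_starProjection_image_range_adjoint (T : E →L[𝕜] F)
    (K : Submodule 𝕜 E) [CompleteSpace K] :
    IsClosed (T '' K) ↔ IsClosed (K.starProjection '' Set.range (T†)) := by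
  have hK : IsClosed (K : Set E) := (completeSpace_coe_iff_isComplete.mp ‹_›).isClosed
  calc IsClosed (T '' K) ↔ IsClosed (Set.range (T ∘L K.subtypeL)) := by
        rw [coe_comp, Set.range_comp, Submodule.coe_subtypeL, Submodule.coe_subtype, Subtype.range_coe]
    _ ↔ IsClosed (Set.range ((T ∘L K.subtypeL)†)) := isClosed_range_iff_isClosed_range_adjoint _
    _ ↔ IsClosed (Subtype.val '' Set.range ((T ∘L K.subtypeL)†)) :=
        hK.isClosedEmbedding_subtypeVal.isClosed_iff_image_isClosed
    _ ↔ IsClosed (K.starProjection '' Set.range (T†)) := by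
        rw [adjoint_comp, K.adjoint_subtypeL, ← Set.range_comp, ← Set.range_comp]
        rfl

end ContinuousLinearMap

theorem Submodule.starProjection_image_eq {𝕜 E : Type*} [RCLike 𝕜] [NormedAddCommGroup E]
    [InnerProductSpace 𝕜 E] (K : Submodule 𝕜 E) [K.HasOrthogonalProjection] (S : Set E) :
    K.starProjection '' S = {p | p ∈ K ∧ ∃ u ∈ S, ∀ x ∈ K, ⟪u - p, x⟫_𝕜 = 0} := by
  ext p
  constructor
  · rintro ⟨u, hu, rfl⟩
    exact ⟨K.starProjection_apply_mem u, u, hu, K.starProjection_inner_eq_zero u⟩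
  · rintro ⟨hp, u, hu, horth⟩
    exact ⟨u, hu, K.eq_starProjection_of_mem_of_inner_eq_zero hp horth⟩

theorem isClosed_image_iff_of_involutive {X : Type*} [TopologicalSpace X] {f : X → X}
    (hf : Function.Involutive f) (hc : Continuous f) {s : Set X} :
    IsClosed (f '' s) ↔ IsClosed s := by
  rw [hf.image_eq_preimage_symm]
  refine ⟨fun h => ?_, fun h => h.preimage hc⟩
  simpa [← Set.preimage_comp, hf.comp_self] using h.preimage hc

namespace RealStructure

variable {V : Type*} [NormedAddCommGroup V] [InnerProductSpace ℂ V] (r : RealStructure V)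

def toAddMonoidHom : V →+ V := AddMonoidHom.mk' r.conj r.map_add

theorem map_neg (v : V) : r.conj (-v) = -r.conj v := _root_.map_neg r.toAddMonoidHom v

theorem map_sub (v w : V) : r.conj (v - w) = r.conj v - r.conj w :=
  _root_.map_sub r.toAddMonoidHom v w

theorem map_zero : r.conj 0 = 0 := _root_.map_zero r.toAddMonoidHom

theorem norm_conj (v : V) : ‖r.conj v‖ = ‖v‖ := by
  rw [norm_eq_sqrt_re_inner (𝕜 := ℂ), r.inner_conj, RCLike.conj_re, ← norm_eq_sqrt_re_inner]

@[fun_prop]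
theorem continuous_conj : Continuous r.conj :=
  (AddMonoidHomClass.isometry_of_norm r.toAddMonoidHom r.norm_conj).continuous

end RealStructure

section PairConj

variable {A B : Type*} [NormedAddCommGroup A] [InnerProductSpace ℂ A]
  [NormedAddCommGroup B] [InnerProductSpace ℂ B] (rA : RealStructure A) (rB : RealStructure B)

theorem pairConj_involutive : Function.Involutive (pairConj rA rB) := fun x => by
  simp [pairConj, rA.invol, rB.map_neg, rB.invol]

@[fun_prop]
theorem continuous_pairConj : Continuous (pairConj rA rB) := by
  unfold pairConj; fun_prop

theorem pairInner_pairConj (x y : A × B) :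
    pairInner (pairConj rA rB x) (pairConj rA rB y) = (starRingEnd ℂ) (pairInner x y) := by
  simp [pairConj, pairInner, rA.inner_conj, rB.inner_conj]

theorem isClosed_setOf_forall_pairInner_eq_zero (S : Set (A × B)) :
    IsClosed {y : A × B | ∀ x ∈ S, pairInner x y = 0} := by
  simp only [Set.ofPred_forall]
  exact isClosed_biInter fun x _ => isClosed_eq (by unfold pairInner; fun_prop) continuous_const

theorem IsLagrangianPair.isClosed {rA : RealStructure A} {rB : RealStructure B}
    {L : Submodule ℂ (A × B)} (h : IsLagrangianPair rA rB L) :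
    IsClosed (L : Set (A × B)) := by
  rw [← Set.preimage_image_eq (L : Set (A × B)) (pairConj_involutive rA rB).injective, h]
  exact (isClosed_setOf_forall_pairInner_eq_zero _).preimage (continuous_pairConj rA rB)

end PairConj

section Conjugation

variable {V₀ V₁ V₂ : Type*} [NormedAddCommGroup V₀] [InnerProductSpace ℂ V₀]
  [NormedAddCommGroup V₁] [InnerProductSpace ℂ V₁] [NormedAddCommGroup V₂] [InnerProductSpace ℂ V₂]
  (r₀ : RealStructure V₀) (r₁ : RealStructure V₁) (r₂ : RealStructure V₂)

theorem conjE_involutive : Function.Involutive (conjE r₀ r₁ r₂) := fun x => by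
  simp [conjE, pairConj_involutive _ _ _]

@[fun_prop]
theorem continuous_conjE : Continuous (conjE r₀ r₁ r₂) := by
  unfold conjE; fun_prop

theorem conjE_sub (x y : (V₀ × V₁) × (V₁ × V₂)) :
    conjE r₀ r₁ r₂ (x - y) = conjE r₀ r₁ r₂ x - conjE r₀ r₁ r₂ y := by
  simp [conjE, pairConj, RealStructure.map_sub, neg_add_eq_sub]

theorem innerE_conjE (x y : (V₀ × V₁) × (V₁ × V₂)) :
    innerE (conjE r₀ r₁ r₂ x) (conjE r₀ r₁ r₂ y) = (starRingEnd ℂ) (innerE x y) := by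
  simp [conjE, innerE, pairInner_pairConj]

theorem image_conjE_projSet_subset (C S : Set ((V₀ × V₁) × (V₁ × V₂))) :
    conjE r₀ r₁ r₂ '' projSet C S ⊆ projSet (conjE r₀ r₁ r₂ '' C) (conjE r₀ r₁ r₂ '' S) := by
  rintro _ ⟨p, ⟨hpC, u, huS, horth⟩, rfl⟩
  refine ⟨⟨p, hpC, rfl⟩, conjE r₀ r₁ r₂ u, ⟨u, huS, rfl⟩, ?_⟩
  rintro _ ⟨x, hxC, rfl⟩
  rw [← conjE_sub, innerE_conjE, horth x hxC, map_zero]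

theorem projSet_image_conjE (C S : Set ((V₀ × V₁) × (V₁ × V₂))) :
    projSet (conjE r₀ r₁ r₂ '' C) (conjE r₀ r₁ r₂ '' S) = conjE r₀ r₁ r₂ '' projSet C S := by
  have hinv (X : Set ((V₀ × V₁) × (V₁ × V₂))) : conjE r₀ r₁ r₂ '' (conjE r₀ r₁ r₂ '' X) = X := by
    rw [(conjE_involutive r₀ r₁ r₂).image_eq_preimage_symm]
    exact (conjE_involutive r₀ r₁ r₂).preimage X
  refine subset_antisymm ?_ (image_conjE_projSet_subset r₀ r₁ r₂ C S)
  conv_lhs => rw [← hinv (projSet _ _)]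
  conv_rhs => rw [← hinv C, ← hinv S]
  exact Set.image_mono (image_conjE_projSet_subset r₀ r₁ r₂ _ _)

end Conjugation

section HilbertSum

variable {V₀ V₁ V₂ : Type*} [NormedAddCommGroup V₀] [InnerProductSpace ℂ V₀]
  [NormedAddCommGroup V₁] [InnerProductSpace ℂ V₁] [NormedAddCommGroup V₂] [InnerProductSpace ℂ V₂]

/-- `innerE` is the inner product of this `L²` copy of `(V₀ × V₁) × (V₁ × V₂)`, whose own norm is
the sup norm. -/
abbrev HilbertSum (V₀ V₁ V₂ : Type*) [NormedAddCommGroup V₀] [InnerProductSpace ℂ V₀]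
    [NormedAddCommGroup V₁] [InnerProductSpace ℂ V₁] [NormedAddCommGroup V₂]
    [InnerProductSpace ℂ V₂] :=
  WithLp 2 (WithLp 2 (V₀ × V₁) × WithLp 2 (V₁ × V₂))

variable (V₀ V₁ V₂) in
def l2Equiv : HilbertSum V₀ V₁ V₂ ≃L[ℂ] (V₀ × V₁) × (V₁ × V₂) :=
  (WithLp.prodContinuousLinearEquiv 2 ℂ _ _).trans
    ((WithLp.prodContinuousLinearEquiv 2 ℂ V₀ V₁).prodCongr
      (WithLp.prodContinuousLinearEquiv 2 ℂ V₁ V₂))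

theorem innerE_l2Equiv (x y : HilbertSum V₀ V₁ V₂) :
    innerE (l2Equiv V₀ V₁ V₂ x) (l2Equiv V₀ V₁ V₂ y) = ⟪x, y⟫_ℂ := rfl

theorem projSet_image_l2Equiv (K : Submodule ℂ (HilbertSum V₀ V₁ V₂)) [K.HasOrthogonalProjection]
    (S : Set (HilbertSum V₀ V₁ V₂)) :
    projSet (l2Equiv V₀ V₁ V₂ '' K) (l2Equiv V₀ V₁ V₂ '' S) =
      l2Equiv V₀ V₁ V₂ '' (K.starProjection '' S) := by
  rw [K.starProjection_image_eq]
  ext p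
  obtain ⟨q, rfl⟩ := (l2Equiv V₀ V₁ V₂).surjective p
  simp only [projSet, Set.mem_ofPred_eq, (l2Equiv V₀ V₁ V₂).injective.mem_set_image,
    SetLike.mem_coe, Set.exists_mem_image, Set.forall_mem_image, ← map_sub, innerE_l2Equiv]

def sigmaE : (V₀ × V₁) × (V₁ × V₂) →L[ℂ] V₁ :=
  ContinuousLinearMap.snd ℂ V₀ V₁ ∘L ContinuousLinearMap.fst ℂ _ _ -
    ContinuousLinearMap.fst ℂ V₁ V₂ ∘L ContinuousLinearMap.snd ℂ _ _

def deltaBarE : V₁ →L[ℂ] (V₀ × V₁) × (V₁ × V₂) :=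
  ((0 : V₁ →L[ℂ] V₀).prod (ContinuousLinearMap.id ℂ V₁)).prod
    ((-ContinuousLinearMap.id ℂ V₁).prod (0 : V₁ →L[ℂ] V₂))

theorem innerE_deltaBarE (w : V₁) (x : (V₀ × V₁) × (V₁ × V₂)) :
    innerE (deltaBarE w) x = ⟪w, sigmaE x⟫_ℂ := by
  change ⟪0, x.1.1⟫_ℂ + ⟪w, x.1.2⟫_ℂ + (⟪-w, x.2.1⟫_ℂ + ⟪0, x.2.2⟫_ℂ) = ⟪w, x.1.2 - x.2.1⟫_ℂ
  rw [inner_zero_left, inner_zero_left, inner_neg_left, inner_sub_right]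
  ring

theorem adjoint_sigmaE_comp_l2Equiv [CompleteSpace V₀] [CompleteSpace V₁] [CompleteSpace V₂] :
    (sigmaE ∘L (l2Equiv V₀ V₁ V₂).toContinuousLinearMap)† =
      (l2Equiv V₀ V₁ V₂).symm.toContinuousLinearMap ∘L deltaBarE := by
  refine ((ContinuousLinearMap.eq_adjoint_iff _ _).mpr fun w x => ?_).symm
  rw [← innerE_l2Equiv]
  exact innerE_deltaBarE w _

theorem image_sigmaE_prod (L01 : Submodule ℂ (V₀ × V₁)) (L12 : Submodule ℂ (V₁ × V₂)) :
    sigmaE '' (L01.prod L12 : Set ((V₀ × V₁) × (V₁ × V₂))) =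
      {w | ∃ x ∈ L01, ∃ y ∈ L12, w = x.2 - y.1} := by
  ext w
  constructor
  · rintro ⟨⟨x, y⟩, ⟨hx, hy⟩, rfl⟩
    exact ⟨x, hx, y, hy, rfl⟩
  · rintro ⟨x, hx, y, hy, rfl⟩
    exact ⟨(x, y), ⟨hx, hy⟩, rfl⟩

theorem range_deltaBarE (r : RealStructure V₁) :
    Set.range (deltaBarE : V₁ →L[ℂ] (V₀ × V₁) × (V₁ × V₂)) =
      {x | ∃ w, x = ((0, -r.conj w), (r.conj w, 0))} := by
  ext x
  constructor
  · rintro ⟨v, rfl⟩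
    exact ⟨-r.conj v, by simp [deltaBarE, r.map_neg, r.invol]⟩
  · rintro ⟨w, rfl⟩
    exact ⟨-r.conj w, by simp [deltaBarE]⟩

theorem image_conjE_range_deltaBarE (r₀ : RealStructure V₀) (r₁ : RealStructure V₁)
    (r₂ : RealStructure V₂) :
    conjE r₀ r₁ r₂ '' Set.range deltaBarE = {x | ∃ w, x = ((0, w), (w, 0))} := by
  ext x
  constructor
  · rintro ⟨_, ⟨v, rfl⟩, rfl⟩
    exact ⟨-r₁.conj v, by simp [conjE, pairConj, deltaBarE, r₀.map_zero, r₂.map_zero, r₁.map_neg]⟩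
  · rintro ⟨w, rfl⟩
    refine ⟨_, ⟨-r₁.conj w, rfl⟩, ?_⟩
    simp [conjE, pairConj, deltaBarE, r₀.map_zero, r₂.map_zero, r₁.map_neg, r₁.invol]

end HilbertSum

/-- `σ|_L` has closed range if and only if `P_L(Ū)` and `P_{L̄}(U)` are closed. -/
theorem sigma_closed_range_iff_projections_closed
    (r₀ : RealStructure W₀) (r₁ : RealStructure W₁) (r₂ : RealStructure W₂)
    (L01 : Submodule ℂ (W₀ × W₁)) (L12 : Submodule ℂ (W₁ × W₂))
    (h01 : IsLagrangianPair r₀ r₁ L01) (h12 : IsLagrangianPair r₁ r₂ L12) :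
    let L : Set ((W₀ × W₁) × (W₁ × W₂)) := (L01.prod L12 : Set ((W₀ × W₁) × (W₁ × W₂)))
    let Lbar : Set ((W₀ × W₁) × (W₁ × W₂)) := conjE r₀ r₁ r₂ '' L
    let U : Set ((W₀ × W₁) × (W₁ × W₂)) := {x | ∃ w : W₁, x = ((0, w), (w, 0))}
    let Ubar : Set ((W₀ × W₁) × (W₁ × W₂)) :=
      {x | ∃ w : W₁, x = ((0, -r₁.conj w), (r₁.conj w, 0))}
    -- σ restricted to L has closed range …
    IsClosed {w : W₁ | ∃ x ∈ L01, ∃ y ∈ L12, w = x.2 - y.1} ↔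
    -- … iff P_L(Ū) and P_{L̄}(U) are both closed.
    (IsClosed (projSet L Ubar) ∧ IsClosed (projSet Lbar U)) := by
  intro L Lbar U Ubar
  set e := l2Equiv W₀ W₁ W₂
  set T := sigmaE ∘L e.toContinuousLinearMap
  let K : Submodule ℂ (HilbertSum W₀ W₁ W₂) := (L01.prod L12).comap e.toLinearEquiv.toLinearMap
  have hL : IsClosed L := h01.isClosed.prod h12.isClosed
  have : CompleteSpace K := (hL.preimage e.continuous).completeSpace_coe
  have hLK : L = e '' K := (Set.image_preimage_eq L e.surjective).symm
  have hσ : {w : W₁ | ∃ x ∈ L01, ∃ y ∈ L12, w = x.2 - y.1} = T '' K := by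
    rw [ContinuousLinearMap.coe_comp, Set.image_comp, ContinuousLinearEquiv.coe_coe, ← hLK,
      image_sigmaE_prod]
  have hUbar : Ubar = Set.range deltaBarE := (range_deltaBarE r₁).symm
  have hUbarT : Ubar = e '' Set.range (T†) := by
    rw [adjoint_sigmaE_comp_l2Equiv, ContinuousLinearMap.coe_comp, Set.range_comp, ← hUbar]
    exact (e.image_symm_image Ubar).symm
  have hU : U = conjE r₀ r₁ r₂ '' Ubar := by
    rw [hUbar, image_conjE_range_deltaBarE]
  have hσ_iff : IsClosed {w : W₁ | ∃ x ∈ L01, ∃ y ∈ L12, w = x.2 - y.1} ↔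
      IsClosed (projSet L Ubar) := by
    rw [hσ, T.isClosed_image_iff_isClosed_starProjection_image_range_adjoint, hLK, hUbarT,
      projSet_image_l2Equiv]
    exact e.toHomeomorph.isClosed_image.symm
  have hconj : IsClosed (projSet Lbar U) ↔ IsClosed (projSet L Ubar) := by
    rw [hU, projSet_image_conjE,
      isClosed_image_iff_of_involutive (conjE_involutive r₀ r₁ r₂) (continuous_conjE r₀ r₁ r₂)]
  rw [hconj, hσ_iff, and_self]
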